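/- Let B be a totally sign-skew-symmetric n×n integer matrix and assume that for every finite sequence w of mutation indices the C-matrix C_w is column sign-coherent. Then for every finite sequence w, det(G_w) = det(C_w) ∈ {1, −1}; in particular, the columns of G_w (the g-vectors) form a ℤ-basis of ℤ^n and the columns of C_w (the c-vectors) form a ℤ-basis of ℤ^n. -/
import Mathlib


open Matrix

/-- Mutation of an integer matrix at index `k`. -/
def mutB {n : ℕ} (B : Matrix (Fin n) (Fin n) ℤ) (k : Fin n) : Matrix (Fin n) (Fin n) ℤ :=
  Matrix.of fun i j =>
    if i = k ∨ j = k then -B i j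
    else B i j + (B i k).sign * max (B i k * B k j) 0

/-- Sign-skew-symmetric matrix. -/
def SignSkew {n : ℕ} (B : Matrix (Fin n) (Fin n) ℤ) : Prop :=
  ∀ i j, B i j * B j i ≤ 0 ∧ (B i j * B j i = 0 → B i j = 0 ∧ B j i = 0)

/-- Entrywise positive part `[A]₊`. -/
def matPos {n : ℕ} (A : Matrix (Fin n) (Fin n) ℤ) : Matrix (Fin n) (Fin n) ℤ :=
  Matrix.of fun i j => max (A i j) 0

/-- `A^{k·}`: agrees with `A` in row `k`, zero elsewhere. -/
def rowSel {n : ℕ} (A : Matrix (Fin n) (Fin n) ℤ) (k : Fin n) : Matrix (Fin n) (Fin n) ℤ :=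
  Matrix.of fun i j => if i = k then A i j else 0

/-- `A^{·k}`: agrees with `A` in column `k`, zero elsewhere. -/
def colSel {n : ℕ} (A : Matrix (Fin n) (Fin n) ℤ) (k : Fin n) : Matrix (Fin n) (Fin n) ℤ :=
  Matrix.of fun i j => if j = k then A i j else 0

/-- `J_k`: identity matrix with the `(k,k)` entry replaced by `-1`. -/
def Jmat (n : ℕ) (k : Fin n) : Matrix (Fin n) (Fin n) ℤ :=
  Matrix.of fun i j => if i = j then (if i = k then -1 else 1) else 0

/-- One mutation step on a triple `(B_w, C_w, G_w)`, with fixed initial matrix `B0`: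
`B_{w·k} = μ_k(B_w)`, `C_{w·k} = C_w (J_k + [B_w]₊^{k·}) + [-C_w]₊^{·k} B_w`,
`G_{w·k} = G_w (J_k + [-B_w]₊^{·k}) - B0 [-C_w]₊^{·k}`. -/
def BCGstep {n : ℕ} (B0 : Matrix (Fin n) (Fin n) ℤ)
    (s : Matrix (Fin n) (Fin n) ℤ × Matrix (Fin n) (Fin n) ℤ × Matrix (Fin n) (Fin n) ℤ)
    (k : Fin n) :
    Matrix (Fin n) (Fin n) ℤ × Matrix (Fin n) (Fin n) ℤ × Matrix (Fin n) (Fin n) ℤ :=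
  (mutB s.1 k,
   s.2.1 * (Jmat n k + rowSel (matPos s.1) k) + colSel (matPos (-s.2.1)) k * s.1,
   s.2.2 * (Jmat n k + colSel (matPos (-s.1)) k) - B0 * colSel (matPos (-s.2.1)) k)

/-- The triple `(B_w, C_w, G_w)` associated to a mutation sequence `w`
(entries of `w` are applied from left to right). -/
def BCG {n : ℕ} (B : Matrix (Fin n) (Fin n) ℤ) (w : List (Fin n)) :
    Matrix (Fin n) (Fin n) ℤ × Matrix (Fin n) (Fin n) ℤ × Matrix (Fin n) (Fin n) ℤ :=
  w.foldl (BCGstep B) (B, 1, 1)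

/-- The exchange matrix `B_w` of `B` at the sequence `w`. -/
def Bmat {n : ℕ} (B : Matrix (Fin n) (Fin n) ℤ) (w : List (Fin n)) :
    Matrix (Fin n) (Fin n) ℤ := (BCG B w).1

/-- The `C`-matrix `C_w^B`. -/
def Cmat {n : ℕ} (B : Matrix (Fin n) (Fin n) ℤ) (w : List (Fin n)) :
    Matrix (Fin n) (Fin n) ℤ := (BCG B w).2.1

/-- The `G`-matrix `G_w^B`. -/
def Gmat {n : ℕ} (B : Matrix (Fin n) (Fin n) ℤ) (w : List (Fin n)) :
    Matrix (Fin n) (Fin n) ℤ := (BCG B w).2.2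

/-- Totally sign-skew-symmetric: every matrix obtained from `B` by a finite sequence of
mutations is sign-skew-symmetric. -/
def TotSSS {n : ℕ} (B : Matrix (Fin n) (Fin n) ℤ) : Prop :=
  ∀ w : List (Fin n), SignSkew (Bmat B w)

/-- The `j`-th column of `A` is sign-coherent with sign `ε`. -/
def ColHasSign {n : ℕ} (A : Matrix (Fin n) (Fin n) ℤ) (j : Fin n) (ε : ℤ) : Prop :=
  (∃ i, A i j ≠ 0) ∧ ((ε = 1 ∧ ∀ i, 0 ≤ A i j) ∨ (ε = -1 ∧ ∀ i, A i j ≤ 0))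

/-- The `j`-th column of `A` is sign-coherent. -/
def ColSignCoherent {n : ℕ} (A : Matrix (Fin n) (Fin n) ℤ) (j : Fin n) : Prop :=
  ∃ ε : ℤ, ColHasSign A j ε

/-- The `i`-th row of `A` is sign-coherent with sign `ε`. -/
def RowHasSign {n : ℕ} (A : Matrix (Fin n) (Fin n) ℤ) (i : Fin n) (ε : ℤ) : Prop :=
  (∃ j, A i j ≠ 0) ∧ ((ε = 1 ∧ ∀ j, 0 ≤ A i j) ∨ (ε = -1 ∧ ∀ j, A i j ≤ 0))

/-- The **Assumption**: for every matrix `B₀` obtained from `B` or `-B` by a finite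
sequence of mutations, every sequence `w` and every index `k`, the `k`-th columns of
`C_w^{B₀}` and `C_w^{-B₀ᵀ}` are both sign-coherent with the same sign. -/
def TheAssumption {n : ℕ} (B : Matrix (Fin n) (Fin n) ℤ) : Prop :=
  ∀ B0 : Matrix (Fin n) (Fin n) ℤ,
    ((∃ v : List (Fin n), B0 = Bmat B v) ∨ (∃ v : List (Fin n), B0 = Bmat (-B) v)) →
    ∀ (w : List (Fin n)) (k : Fin n),
      ∃ ε : ℤ, ColHasSign (Cmat B0 w) k ε ∧ ColHasSign (Cmat (-B0ᵀ) w) k ε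


section AuxProof

variable {n : ℕ}

private lemma max_sub_self (a : ℤ) : max a 0 - a = max (-a) 0 := by
  rcases le_total a 0 with h | h
  · rw [max_eq_right h, max_eq_left (neg_nonneg.2 h)]; ring
  · rw [max_eq_left h, max_eq_right (neg_nonpos.2 h)]; ring

private lemma sign_aux (a b : ℤ) :
    a.sign * max (a * b) 0 - max (-a) 0 * b = a * max b 0 := by
  rcases lt_trichotomy a 0 with h | h | h
  · rcases le_total b 0 with hb | hb
    · rw [Int.sign_eq_neg_one_of_neg h, max_eq_left (by nlinarith),
        max_eq_right hb, max_eq_left (by linarith)]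
      ring
    · rw [Int.sign_eq_neg_one_of_neg h, max_eq_right (by nlinarith), max_eq_left hb,
        max_eq_left (by linarith)]
      ring
  · simp [h]
  · rcases le_total b 0 with hb | hb
    · rw [Int.sign_eq_one_of_pos h, max_eq_right (by nlinarith), max_eq_right hb,
        max_eq_right (by linarith)]
      ring
    · rw [Int.sign_eq_one_of_pos h, max_eq_left (by nlinarith), max_eq_left hb,
        max_eq_right (by linarith)]
      ring

private lemma Jmat_eq_diagonal (k : Fin n) :
    Jmat n k = Matrix.diagonal (fun i => if i = k then (-1 : ℤ) else 1) := by
  ext i j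
  by_cases h : i = j <;> simp [Jmat, Matrix.diagonal_apply, h]

private lemma colSel_mul_apply (Y M : Matrix (Fin n) (Fin n) ℤ) (k i j : Fin n) :
    (colSel Y k * M) i j = Y i k * M k j := by
  simp [Matrix.mul_apply, colSel, ite_mul]

private lemma mul_rowSel_apply (M Y : Matrix (Fin n) (Fin n) ℤ) (k i j : Fin n) :
    (M * rowSel Y k) i j = M i k * Y k j := by
  simp [Matrix.mul_apply, rowSel, mul_ite]

private lemma colSel_mul (Y M : Matrix (Fin n) (Fin n) ℤ) (k : Fin n) :
    colSel Y k * M = Y * rowSel M k := by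
  ext i j
  rw [colSel_mul_apply, mul_rowSel_apply]

private lemma mul_colSel (M A : Matrix (Fin n) (Fin n) ℤ) (k : Fin n) :
    M * colSel A k = colSel (M * A) k := by
  ext i j
  by_cases hj : j = k <;> simp [colSel, Matrix.mul_apply, hj, mul_ite]

private lemma rowSel_matPos_sub (X : Matrix (Fin n) (Fin n) ℤ) (k : Fin n) :
    rowSel (matPos X) k - rowSel X k = rowSel (matPos (-X)) k := by
  ext i j
  by_cases hi : i = k <;> simp [rowSel, matPos, hi, max_sub_self]

private lemma colSel_matPos_add (X : Matrix (Fin n) (Fin n) ℤ) (k : Fin n) :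
    colSel (matPos (-X)) k + colSel X k = colSel (matPos X) k := by
  ext i j
  by_cases hj : j = k <;> simp [colSel, matPos, hj]
  linarith [max_sub_self (X i k)]

private lemma mutB_neg (X : Matrix (Fin n) (Fin n) ℤ) (k : Fin n) :
    mutB (-X) k = -(mutB X k) := by
  ext i j
  by_cases hij : i = k ∨ j = k
  · simp [mutB, hij]
  · simp only [mutB, Matrix.of_apply, hij, if_false, Matrix.neg_apply, neg_mul_neg,
      Int.sign_neg]
    ring

private lemma mut_conj (X : Matrix (Fin n) (Fin n) ℤ) (k : Fin n) (h : X k k = 0) :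
    (Jmat n k + colSel (matPos (-X)) k) * mutB X k
      = X * (Jmat n k + rowSel (matPos X) k) := by
  ext i j
  rw [Matrix.add_mul, Matrix.mul_add, Matrix.add_apply, Matrix.add_apply,
    colSel_mul_apply, mul_rowSel_apply, Jmat_eq_diagonal, Matrix.diagonal_mul,
    Matrix.mul_diagonal]
  by_cases hi : i = k <;> by_cases hj : j = k <;>
      simp only [mutB, matPos, Matrix.of_apply, Matrix.neg_apply, hi, hj, if_true, if_false,
        eq_self_iff_true, true_or, or_true, or_self, h, neg_zero, mul_zero, zero_mul,
        add_zero, zero_add, neg_mul, one_mul, mul_one, mul_neg, neg_neg, max_self] <;>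
    first
      | ring1
      | linear_combination sign_aux (X i k) (X k j)
      | (simp [h]; done)

private lemma mut_conj' (X : Matrix (Fin n) (Fin n) ℤ) (k : Fin n) (h : X k k = 0) :
    (Jmat n k + colSel (matPos X) k) * mutB X k
      = X * (Jmat n k + rowSel (matPos (-X)) k) := by
  have h2 := mut_conj (-X) k (by simp [h])
  rw [neg_neg, mutB_neg, Matrix.mul_neg, Matrix.neg_mul] at h2
  exact neg_inj.mp h2

private lemma det_J_add_rowSel (A : Matrix (Fin n) (Fin n) ℤ) (k : Fin n) (h : A k k = 0) :
    (Jmat n k + rowSel A k).det = -1 := by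
  haveI : NeZero n := ⟨(Fin.pos k).ne'⟩
  rw [← Matrix.det_submatrix_equiv_self (Equiv.swap (0 : Fin n) k)]
  have htri : ((Jmat n k + rowSel A k).submatrix (Equiv.swap (0 : Fin n) k)
      (Equiv.swap (0 : Fin n) k)).BlockTriangular id := by
    intro i j hij
    simp only [id_eq] at hij
    have hi0 : i ≠ 0 := by
      rintro rfl
      exact absurd hij (by simp)
    have h1 : Equiv.swap (0 : Fin n) k i ≠ k := by
      rw [show k = Equiv.swap (0 : Fin n) k 0 by simp]
      exact fun hc => hi0 ((Equiv.swap (0 : Fin n) k).injective hc)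
    have h2 : Equiv.swap (0 : Fin n) k i ≠ Equiv.swap (0 : Fin n) k j :=
      fun hc => absurd ((Equiv.swap (0 : Fin n) k).injective hc) (ne_of_gt hij)
    simp [Matrix.submatrix_apply, Jmat, rowSel, h1, h2]
  rw [Matrix.det_of_upperTriangular htri]
  have hdiag : ∀ i : Fin n,
      ((Jmat n k + rowSel A k).submatrix (Equiv.swap (0 : Fin n) k)
        (Equiv.swap (0 : Fin n) k)) i i = if i = 0 then (-1 : ℤ) else 1 := by
    intro i
    by_cases hi : i = 0
    · subst hi
      simp [Jmat, rowSel, Equiv.swap_apply_left, h]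
    · have h1 : Equiv.swap (0 : Fin n) k i ≠ k := by
        rw [show k = Equiv.swap (0 : Fin n) k 0 by simp]
        exact fun hc => hi ((Equiv.swap (0 : Fin n) k).injective hc)
      simp [Jmat, rowSel, hi, h1]
  rw [Finset.prod_congr rfl (fun i _ => hdiag i)]
  simp

private lemma det_J_add_colSel (A : Matrix (Fin n) (Fin n) ℤ) (k : Fin n) (h : A k k = 0) :
    (Jmat n k + colSel A k).det = -1 := by
  rw [← Matrix.det_transpose]
  have htr : (Jmat n k + colSel A k)ᵀ = Jmat n k + rowSel Aᵀ k := by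
    ext i j
    by_cases hij : i = j <;>
      simp [Jmat, colSel, rowSel, Matrix.transpose_apply, hij, eq_comm]
  rw [htr]
  exact det_J_add_rowSel _ _ (by simpa using h)

private lemma BCG_append (B : Matrix (Fin n) (Fin n) ℤ) (w : List (Fin n)) (k : Fin n) :
    BCG B (w ++ [k]) = BCGstep B (BCG B w) k := by
  simp [BCG]

private lemma Bmat_append (B : Matrix (Fin n) (Fin n) ℤ) (w : List (Fin n)) (k : Fin n) :
    Bmat B (w ++ [k]) = mutB (Bmat B w) k := by
  simp [Bmat, BCG_append, BCGstep]

private lemma Cmat_append (B : Matrix (Fin n) (Fin n) ℤ) (w : List (Fin n)) (k : Fin n) :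
    Cmat B (w ++ [k]) = Cmat B w * (Jmat n k + rowSel (matPos (Bmat B w)) k)
      + colSel (matPos (-(Cmat B w))) k * Bmat B w := by
  simp [Bmat, Cmat, BCG_append, BCGstep]

private lemma Gmat_append (B : Matrix (Fin n) (Fin n) ℤ) (w : List (Fin n)) (k : Fin n) :
    Gmat B (w ++ [k]) = Gmat B w * (Jmat n k + colSel (matPos (-(Bmat B w))) k)
      - B * colSel (matPos (-(Cmat B w))) k := by
  simp [Bmat, Cmat, Gmat, BCG_append, BCGstep]

private lemma Bmat_diag_zero {B : Matrix (Fin n) (Fin n) ℤ} (hB : TotSSS B)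
    (w : List (Fin n)) (k : Fin n) : Bmat B w k k = 0 := by
  have h := hB w k k
  exact (h.2 (le_antisymm h.1 (mul_self_nonneg _))).1

private lemma main_ind (B : Matrix (Fin n) (Fin n) ℤ) (hB : TotSSS B)
    (hcoh : ∀ (w : List (Fin n)) (j : Fin n), ColSignCoherent (Cmat B w) j)
    (w : List (Fin n)) :
    Gmat B w * Bmat B w = B * Cmat B w ∧
    (Gmat B w).det = (Cmat B w).det ∧
    ((Cmat B w).det = 1 ∨ (Cmat B w).det = -1) := by
  induction w using List.reverseRecOn with
  | nil => simp [Bmat, Cmat, Gmat, BCG]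
  | append_singleton w k ih =>
    obtain ⟨hinv, hdet, hpm⟩ := ih
    have hkk : Bmat B w k k = 0 := Bmat_diag_zero hB w k
    set X := Bmat B w with hXdef
    set C := Cmat B w with hCdef
    set G := Gmat B w with hGdef
    have hXk : matPos X k k = 0 := by simp [matPos, hkk]
    have hXk' : matPos (-X) k k = 0 := by simp [matPos, hkk]
    obtain ⟨ε, hne, hsg⟩ := hcoh w k
    have hBm := Bmat_append B w k
    rcases hsg with ⟨-, hpos⟩ | ⟨-, hneg⟩
    · -- column k of C is nonnegative
      have hP : colSel (matPos (-C)) k = 0 := by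
        ext i j
        by_cases hj : j = k <;> simp only [colSel, matPos, Matrix.of_apply,
          Matrix.neg_apply, Matrix.zero_apply, hj, if_true, if_false]
        exact max_eq_right (by linarith [hpos i])
      have hC : Cmat B (w ++ [k]) = C * (Jmat n k + rowSel (matPos X) k) := by
        rw [Cmat_append]
        simp only [← hXdef, ← hCdef]
        rw [hP, Matrix.zero_mul, add_zero]
      have hG : Gmat B (w ++ [k]) = G * (Jmat n k + colSel (matPos (-X)) k) := by
        rw [Gmat_append]
        simp only [← hXdef, ← hCdef, ← hGdef]
        rw [hP, Matrix.mul_zero, sub_zero]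
      refine ⟨?_, ?_, ?_⟩
      · rw [hG, hBm, hC]
        simp only [← hXdef]
        rw [Matrix.mul_assoc, mut_conj X k hkk, ← Matrix.mul_assoc, hinv, Matrix.mul_assoc]
      · rw [hG, hC, Matrix.det_mul, Matrix.det_mul, det_J_add_colSel _ _ hXk',
          det_J_add_rowSel _ _ hXk, hdet]
      · rw [hC, Matrix.det_mul, det_J_add_rowSel _ _ hXk]
        rcases hpm with h | h <;> rw [h] <;> norm_num
    · -- column k of C is nonpositive
      have hP : colSel (matPos (-C)) k = -(colSel C k) := by
        ext i j
        by_cases hj : j = k <;> simp only [colSel, matPos, Matrix.of_apply,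
          Matrix.neg_apply, hj, if_true, if_false, neg_zero]
        exact max_eq_left (by linarith [hneg i])
      have hC : Cmat B (w ++ [k]) = C * (Jmat n k + rowSel (matPos (-X)) k) := by
        rw [Cmat_append]
        simp only [← hXdef, ← hCdef]
        rw [hP, Matrix.neg_mul, colSel_mul, ← rowSel_matPos_sub, Matrix.mul_add,
          Matrix.mul_add, Matrix.mul_sub]
        abel
      have hG : Gmat B (w ++ [k]) = G * (Jmat n k + colSel (matPos X) k) := by
        rw [Gmat_append]
        simp only [← hXdef, ← hCdef, ← hGdef]
        rw [hP, Matrix.mul_neg, sub_neg_eq_add, mul_colSel B C k, ← hinv, ← mul_colSel,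
          ← Matrix.mul_add, add_assoc, colSel_matPos_add]
      refine ⟨?_, ?_, ?_⟩
      · rw [hG, hBm, hC]
        simp only [← hXdef]
        rw [Matrix.mul_assoc, mut_conj' X k hkk, ← Matrix.mul_assoc, hinv, Matrix.mul_assoc]
      · rw [hG, hC, Matrix.det_mul, Matrix.det_mul, det_J_add_colSel _ _ hXk,
          det_J_add_rowSel _ _ hXk', hdet]
      · rw [hC, Matrix.det_mul, det_J_add_rowSel _ _ hXk']
        rcases hpm with h | h <;> rw [h] <;> norm_num

end AuxProof

/-- if all `C`-matrices of `B` are column sign-coherent, then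
`det G_w = det C_w ∈ {1, -1}`; in particular the columns of `G_w` (the `g`-vectors) and
the columns of `C_w` (the `c`-vectors) form ℤ-bases of `ℤ^n`, i.e. `G_w` and `C_w` are
invertible as integer matrices. -/

theorem det_G_eq_det_C {n : ℕ} (B : Matrix (Fin n) (Fin n) ℤ) (hB : TotSSS B)
    (hcoh : ∀ (w : List (Fin n)) (j : Fin n), ColSignCoherent (Cmat B w) j)
    (w : List (Fin n)) :
    (Gmat B w).det = (Cmat B w).det ∧ ((Cmat B w).det = 1 ∨ (Cmat B w).det = -1) ∧
    IsUnit (Gmat B w) ∧ IsUnit (Cmat B w) := by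
  obtain ⟨hinv, hdet, hpm⟩ := main_ind B hB hcoh w
  have hCunit : IsUnit (Cmat B w).det := by
    rcases hpm with h | h <;> rw [h]
    · exact isUnit_one
    · exact isUnit_one.neg
  have hGunit : IsUnit (Gmat B w).det := hdet ▸ hCunit
  exact ⟨hdet, hpm, (Matrix.isUnit_iff_isUnit_det _).2 hGunit,
    (Matrix.isUnit_iff_isUnit_det _).2 hCunit⟩
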